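/- arXiv:2012.05909 — 4 statements merged into one kernel-verified Lean document; each statement's English description precedes it below -/
import Mathlib

section
/- Let M = (S, A, P, c, γ) be a finite MDP with 0 ≤ γ < 1, optimal value function V* with V_min ≤ V*(s) ≤ V_max, and let M̂ = (S, A, P̂, ĉ, γ) satisfy ∑_{s'} |P̂(s'|s,a) − P(s'|s,a)| ≤ α and |ĉ(s,a) − c(s,a)| ≤ α for all (s,a). Let V̂ satisfy |V̂(s) − V*(s)| ≤ ε for all s, and let π̂ be the one-step greedy policy π̂(s) = argmin_a [ĉ(s,a) + γ ∑_{s'} P̂(s'|s,a) V̂(s')]. Then for all states s, c(s, π̂(s)) − c(s, π*(s)) ≤ 2γε + 2α + γ (∑_{s'} P̂(s'|s, π*(s)) V*(s') − ∑_{s'} P̂(s'|s, π̂(s)) V*(s')), where π* is an optimal policy. -/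
/-- One-step greedy policy cost comparison: if `π̂` is greedy w.r.t. the
approximate model `(ĉ, P̂)` and approximate value `V̂`, then the true cost of
the greedy action is close to that of the optimal action. -/
theorem one_step_greedy_cost_bound
    {S A : Type*} [Fintype S] [Nonempty S] [Fintype A] [Nonempty A]
    (γ α ε : ℝ)
    (P Phat : S → A → S → ℝ) (c chat : S → A → ℝ)
    (Vstar Vhat : S → ℝ) (pistar pihat : S → A)
    (hγ0 : 0 ≤ γ) (hγ1 : γ < 1) (hα : 0 ≤ α) (hε : 0 ≤ ε)
    (hP0 : ∀ s a s', 0 ≤ P s a s') (hP1 : ∀ s a, ∑ s', P s a s' = 1)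
    (hPhat0 : ∀ s a s', 0 ≤ Phat s a s') (hPhat1 : ∀ s a, ∑ s', Phat s a s' = 1)
    (hPα : ∀ s a, ∑ s', |Phat s a s' - P s a s'| ≤ α)
    (hcα : ∀ s a, |chat s a - c s a| ≤ α)
    (hVε : ∀ s, |Vhat s - Vstar s| ≤ ε)
    (hgreedy : ∀ s a,
      chat s (pihat s) + γ * ∑ s', Phat s (pihat s) s' * Vhat s' ≤
      chat s a + γ * ∑ s', Phat s a s' * Vhat s') :
    ∀ s, c s (pihat s) - c s (pistar s) ≤
      2 * γ * ε + 2 * α +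
      γ * ((∑ s', Phat s (pistar s) s' * Vstar s') -
           (∑ s', Phat s (pihat s) s' * Vstar s')) := by
  intro s
  have key : ∀ a : A, |(∑ s', Phat s a s' * Vhat s') - (∑ s', Phat s a s' * Vstar s')| ≤ ε := by
    intro a
    rw [← Finset.sum_sub_distrib]
    calc |∑ s', (Phat s a s' * Vhat s' - Phat s a s' * Vstar s')|
        ≤ ∑ s', |Phat s a s' * Vhat s' - Phat s a s' * Vstar s'| := Finset.abs_sum_le_sum_abs _ _
      _ = ∑ s', Phat s a s' * |Vhat s' - Vstar s'| := by
          refine Finset.sum_congr rfl fun s' _ => ?_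
          rw [← mul_sub, abs_mul, abs_of_nonneg (hPhat0 s a s')]
      _ ≤ ∑ s', Phat s a s' * ε := by
          refine Finset.sum_le_sum fun s' _ => ?_
          exact mul_le_mul_of_nonneg_left (hVε s') (hPhat0 s a s')
      _ = ε := by rw [← Finset.sum_mul, hPhat1, one_mul]
  have h1 := hgreedy s (pistar s)
  have h2 := abs_le.1 (hcα s (pihat s))
  have h3 := abs_le.1 (hcα s (pistar s))
  have h4 := abs_le.1 (key (pihat s))
  have h5 := abs_le.1 (key (pistar s))
  nlinarith [mul_le_mul_of_nonneg_left h4.1 hγ0, mul_le_mul_of_nonneg_left h5.2 hγ0]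
end

section
/- Let M be a finite MDP with cost function c, transitions P, discount γ ∈ [0,1), and optimal value function V* bounded in [V_min, V_max]. Let M̂ have transitions P̂ and cost ĉ with ∑_{s'} |P̂(s'|s,a) − P(s'|s,a)| ≤ α and |ĉ(s,a) − c(s,a)| ≤ α for all (s,a). Let V̂ satisfy ‖V̂ − V*‖_∞ ≤ ε, and let π̂ be the one-step greedy policy with respect to (ĉ, P̂, V̂). Then ‖V^{π̂}_M − V*‖_∞ ≤ 2(γε + α + γα(V_max − V_min)/2)/(1 − γ). -/
private lemma sum_mul_le_of_prob {S : Type*} [Fintype S] (p g : S → ℝ) (M : ℝ)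
    (hp0 : ∀ t, 0 ≤ p t) (hp1 : ∑ t, p t = 1) (hg : ∀ t, g t ≤ M) :
    ∑ t, p t * g t ≤ M := by
  calc ∑ t, p t * g t ≤ ∑ t, p t * M :=
        Finset.sum_le_sum fun t _ => mul_le_mul_of_nonneg_left (hg t) (hp0 t)
    _ = M := by rw [← Finset.sum_mul, hp1, one_mul]

private lemma le_sum_mul_of_prob {S : Type*} [Fintype S] (p g : S → ℝ) (m : ℝ)
    (hp0 : ∀ t, 0 ≤ p t) (hp1 : ∑ t, p t = 1) (hg : ∀ t, m ≤ g t) :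
    m ≤ ∑ t, p t * g t := by
  calc m = ∑ t, p t * m := by rw [← Finset.sum_mul, hp1, one_mul]
    _ ≤ ∑ t, p t * g t :=
        Finset.sum_le_sum fun t _ => mul_le_mul_of_nonneg_left (hg t) (hp0 t)

private lemma shift_bound {S : Type*} [Fintype S] (q g : S → ℝ) (α m r : ℝ)
    (hq : ∑ t, q t = 0) (habs : ∑ t, |q t| ≤ α) (hr : 0 ≤ r)
    (hg : ∀ t, |g t - m| ≤ r) :
    |∑ t, q t * g t| ≤ α * r := by
  have h1 : ∑ t, q t * g t = ∑ t, q t * (g t - m) := by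
    simp [mul_sub, Finset.sum_sub_distrib, ← Finset.sum_mul, hq]
  rw [h1]
  calc |∑ t, q t * (g t - m)| ≤ ∑ t, |q t * (g t - m)| := Finset.abs_sum_le_sum_abs _ _
    _ ≤ ∑ t, |q t| * r := Finset.sum_le_sum fun t _ => by
        rw [abs_mul]; exact mul_le_mul_of_nonneg_left (hg t) (abs_nonneg _)
    _ = (∑ t, |q t|) * r := by rw [Finset.sum_mul]
    _ ≤ α * r := mul_le_mul_of_nonneg_right habs hr

private lemma prob_diff_bound {S : Type*} [Fintype S] (p g h : S → ℝ) (ε : ℝ)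
    (hp0 : ∀ t, 0 ≤ p t) (hp1 : ∑ t, p t = 1) (hd : ∀ t, |g t - h t| ≤ ε) :
    |∑ t, p t * g t - ∑ t, p t * h t| ≤ ε := by
  rw [← Finset.sum_sub_distrib]
  calc |∑ t, (p t * g t - p t * h t)| ≤ ∑ t, |p t * g t - p t * h t| :=
        Finset.abs_sum_le_sum_abs _ _
    _ = ∑ t, p t * |g t - h t| := by
        refine Finset.sum_congr rfl fun t _ => ?_
        rw [← mul_sub, abs_mul, abs_of_nonneg (hp0 t)]
    _ ≤ ∑ t, p t * ε :=
        Finset.sum_le_sum fun t _ => mul_le_mul_of_nonneg_left (hd t) (hp0 t)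
    _ = ε := by rw [← Finset.sum_mul, hp1, one_mul]

/-- Performance bound of the one-step greedy policy using an `α`-approximate
model and an `ε`-approximate value function:
`‖V^π̂_M - V*‖_∞ ≤ 2(γε + α + γα(V_max - V_min)/2)/(1 - γ)`. -/
theorem one_step_greedy_performance_bound
    {S A : Type*} [Fintype S] [Nonempty S] [Fintype A] [Nonempty A]
    (γ α ε Vmin Vmax : ℝ)
    (P Phat : S → A → S → ℝ) (c chat : S → A → ℝ)
    (Vstar Vhat Vpihat : S → ℝ) (pistar pihat : S → A)
    (hγ0 : 0 ≤ γ) (hγ1 : γ < 1) (hα : 0 ≤ α) (hε : 0 ≤ ε)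
    (hP0 : ∀ s a s', 0 ≤ P s a s') (hP1 : ∀ s a, ∑ s', P s a s' = 1)
    (hPhat0 : ∀ s a s', 0 ≤ Phat s a s') (hPhat1 : ∀ s a, ∑ s', Phat s a s' = 1)
    (hPα : ∀ s a, ∑ s', |Phat s a s' - P s a s'| ≤ α)
    (hcα : ∀ s a, |chat s a - c s a| ≤ α)
    (hVbound : ∀ s, Vmin ≤ Vstar s ∧ Vstar s ≤ Vmax)
    (hVε : ∀ s, |Vhat s - Vstar s| ≤ ε)
    -- `V*` is the value of the optimal policy `π*` on `M` (Bellman equation) …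
    (hVstarBellman : ∀ s,
      Vstar s = c s (pistar s) + γ * ∑ s', P s (pistar s) s' * Vstar s')
    -- … and `V*` is optimal (Bellman optimality inequality)
    (hVstarOpt : ∀ s a, Vstar s ≤ c s a + γ * ∑ s', P s a s' * Vstar s')
    -- `V^π̂_M` is the value of `π̂` on the true MDP `M`
    (hVpihatBellman : ∀ s,
      Vpihat s = c s (pihat s) + γ * ∑ s', P s (pihat s) s' * Vpihat s')
    -- `π̂` is the one-step greedy policy w.r.t. `(ĉ, P̂, V̂)`
    (hgreedy : ∀ s a,
      chat s (pihat s) + γ * ∑ s', Phat s (pihat s) s' * Vhat s' ≤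
      chat s a + γ * ∑ s', Phat s a s' * Vhat s') :
    ∀ s, |Vpihat s - Vstar s| ≤
      2 * (γ * ε + α + γ * α * ((Vmax - Vmin) / 2)) / (1 - γ) := by
  have h1γ : (0:ℝ) < 1 - γ := by linarith
  set K : ℝ := γ * ε + α + γ * α * ((Vmax - Vmin) / 2) with hK
  clear_value K
  have hVmm : Vmin ≤ Vmax := by
    obtain ⟨s⟩ := (inferInstance : Nonempty S)
    exact le_trans (hVbound s).1 (hVbound s).2
  have hr : (0:ℝ) ≤ (Vmax - Vmin) / 2 := by linarith
  -- Vstar is within (Vmax - Vmin)/2 of the midpoint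
  have hmid : ∀ t, |Vstar t - (Vmax + Vmin) / 2| ≤ (Vmax - Vmin) / 2 := by
    intro t
    have h := hVbound t
    rw [abs_le]; constructor <;> linarith [h.1, h.2]
  -- model-error sum bound
  have hmodel : ∀ s a,
      |∑ s', Phat s a s' * Vstar s' - ∑ s', P s a s' * Vstar s'|
        ≤ α * ((Vmax - Vmin) / 2) := by
    intro s a
    have hq : ∑ s', (Phat s a s' - P s a s') = 0 := by
      rw [Finset.sum_sub_distrib, hPhat1, hP1]; ring
    have := shift_bound (fun s' => Phat s a s' - P s a s') Vstar α
      ((Vmax + Vmin) / 2) ((Vmax - Vmin) / 2) hq (hPα s a) hr hmid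
    calc |∑ s', Phat s a s' * Vstar s' - ∑ s', P s a s' * Vstar s'|
        = |∑ s', (Phat s a s' - P s a s') * Vstar s'| := by
          rw [← Finset.sum_sub_distrib]; congr 1
          exact Finset.sum_congr rfl fun t _ => by ring
      _ ≤ α * ((Vmax - Vmin) / 2) := this
  -- value-error sum bound
  have hval : ∀ s a,
      |∑ s', Phat s a s' * Vhat s' - ∑ s', Phat s a s' * Vstar s'| ≤ ε :=
    fun s a => prob_diff_bound (Phat s a) Vhat Vstar ε
      (hPhat0 s a) (hPhat1 s a) hVε
  -- the key one-step bound: the Bellman backup of Vstar along pihat is ≤ Vstar + 2K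
  have hA : ∀ s, c s (pihat s) + γ * ∑ s', P s (pihat s) s' * Vstar s'
      ≤ Vstar s + 2 * K := by
    intro s
    have h1 := abs_le.1 (hcα s (pihat s))
    have h2 := abs_le.1 (hmodel s (pihat s))
    have h3 := abs_le.1 (hval s (pihat s))
    have h4 := hgreedy s (pistar s)
    have h5 := abs_le.1 (hval s (pistar s))
    have h6 := abs_le.1 (hmodel s (pistar s))
    have h7 := abs_le.1 (hcα s (pistar s))
    have hB := hVstarBellman s
    -- multiply sum bounds by γ
    have m2 : γ * ∑ s', P s (pihat s) s' * Vstar s'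
        ≤ γ * (∑ s', Phat s (pihat s) s' * Vstar s' + α * ((Vmax - Vmin) / 2)) :=
      mul_le_mul_of_nonneg_left (by linarith [h2.1]) hγ0
    have m3 : γ * ∑ s', Phat s (pihat s) s' * Vstar s'
        ≤ γ * (∑ s', Phat s (pihat s) s' * Vhat s' + ε) :=
      mul_le_mul_of_nonneg_left (by linarith [h3.1]) hγ0
    have m5 : γ * ∑ s', Phat s (pistar s) s' * Vhat s'
        ≤ γ * (∑ s', Phat s (pistar s) s' * Vstar s' + ε) :=
      mul_le_mul_of_nonneg_left (by linarith [h5.2]) hγ0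
    have m6 : γ * ∑ s', Phat s (pistar s) s' * Vstar s'
        ≤ γ * (∑ s', P s (pistar s) s' * Vstar s' + α * ((Vmax - Vmin) / 2)) :=
      mul_le_mul_of_nonneg_left (by linarith [h6.2]) hγ0
    have hKexp : 2 * K = 2 * (γ * ε) + 2 * α + 2 * (γ * (α * ((Vmax - Vmin) / 2))) := by
      rw [hK]; ring
    linarith [h1.1, h7.2, m2, m3, h4, m5, m6, hB, hKexp]
  -- nonnegativity of Vpihat - Vstar
  obtain ⟨s1, -, hs1⟩ := Finset.exists_min_image Finset.univ
    (fun t => Vpihat t - Vstar t) ⟨Classical.arbitrary S, Finset.mem_univ _⟩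
  have hnn : ∀ t, 0 ≤ Vpihat t - Vstar t := by
    have hmin : ∀ t, Vpihat s1 - Vstar s1 ≤ Vpihat t - Vstar t :=
      fun t => hs1 t (Finset.mem_univ t)
    have hlow : Vpihat s1 - Vstar s1 ≤ ∑ s', P s1 (pihat s1) s' * (Vpihat s' - Vstar s') :=
      le_sum_mul_of_prob (P s1 (pihat s1)) (fun t => Vpihat t - Vstar t) _
        (hP0 s1 (pihat s1)) (hP1 s1 (pihat s1)) hmin
    have hsplit : ∑ s', P s1 (pihat s1) s' * (Vpihat s' - Vstar s')
        = ∑ s', P s1 (pihat s1) s' * Vpihat s' - ∑ s', P s1 (pihat s1) s' * Vstar s' := by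
      rw [← Finset.sum_sub_distrib]
      exact Finset.sum_congr rfl fun t _ => by ring
    have hopt := hVstarOpt s1 (pihat s1)
    have hBel := hVpihatBellman s1
    -- Vpihat s1 - Vstar s1 ≥ γ * (sum diff) ≥ γ * (Vpihat s1 - Vstar s1)
    have key : γ * (Vpihat s1 - Vstar s1) ≤ Vpihat s1 - Vstar s1 := by
      have h := mul_le_mul_of_nonneg_left hlow hγ0
      nlinarith
    intro t
    have : 0 ≤ Vpihat s1 - Vstar s1 := by nlinarith
    linarith [hmin t]
  -- upper bound at the max
  obtain ⟨s0, -, hs0⟩ := Finset.exists_max_image Finset.univ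
    (fun t => Vpihat t - Vstar t) ⟨Classical.arbitrary S, Finset.mem_univ _⟩
  have hmax : ∀ t, Vpihat t - Vstar t ≤ Vpihat s0 - Vstar s0 :=
    fun t => hs0 t (Finset.mem_univ t)
  have hup : ∑ s', P s0 (pihat s0) s' * (Vpihat s' - Vstar s') ≤ Vpihat s0 - Vstar s0 :=
    sum_mul_le_of_prob (P s0 (pihat s0)) (fun t => Vpihat t - Vstar t) _
      (hP0 s0 (pihat s0)) (hP1 s0 (pihat s0)) hmax
  have hsplit0 : ∑ s', P s0 (pihat s0) s' * (Vpihat s' - Vstar s')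
      = ∑ s', P s0 (pihat s0) s' * Vpihat s' - ∑ s', P s0 (pihat s0) s' * Vstar s' := by
    rw [← Finset.sum_sub_distrib]
    exact Finset.sum_congr rfl fun t _ => by ring
  have hBel0 := hVpihatBellman s0
  have hA0 := hA s0
  have hmaxb : Vpihat s0 - Vstar s0 ≤ 2 * K / (1 - γ) := by
    have step : Vpihat s0 - Vstar s0 ≤ 2 * K + γ * (Vpihat s0 - Vstar s0) := by
      have h := mul_le_mul_of_nonneg_left hup hγ0
      nlinarith
    rw [le_div_iff₀ h1γ]; nlinarith
  intro s
  rw [abs_of_nonneg (hnn s)]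
  calc Vpihat s - Vstar s ≤ Vpihat s0 - Vstar s0 := hmax s
    _ ≤ 2 * K / (1 - γ) := hmaxb
end

section
/- Let M and M̂ be finite MDPs sharing state space S, action space A, and discount γ ∈ [0,1), with ∑_{s'}|P̂(s'|s,a) − P(s'|s,a)| ≤ α and |ĉ(s,a) − c(s,a)| ≤ α for all (s,a), with c bounded in [c_min, c_max] and terminal value function V bounded in [V_min, V_max]. For a fixed policy π and horizon H ≥ 1, let J_M(V, π, H)(s) denote the expected H-step discounted cost of executing π from state s in M with terminal cost γ^H V(s_H), and analogously J_{M̂}. Then for all s, |J_M(V, π, H)(s) − J_{M̂}(V, π, H)(s)| ≤ γ ((1 − γ^{H−1})/(1 − γ)) α H (c_max − c_min)/2 + γ^H α H (V_max − V_min)/2 + ((1 − γ^H)/(1 − γ)) α. -/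
open Finset

/-- `hStepCost P c γ π V H s` is the expected `H`-step discounted cost of
executing policy `π` from state `s` in the MDP with transitions `P` and
cost `c`, with terminal cost `γ^H V (s_H)`:
`E[∑_{i=0}^{H-1} γ^i c(s_i, π(s_i)) + γ^H V(s_H)]`. -/
noncomputable def hStepCost {S A : Type*} [Fintype S]
    (P : S → A → S → ℝ) (c : S → A → ℝ) (γ : ℝ) (π : S → A) (V : S → ℝ) :
    ℕ → S → ℝ
  | 0, s => V s
  | H + 1, s => c s (π s) + γ * ∑ s', P s (π s) s' * hStepCost P c γ π V H s'

/-- H-step simulation lemma with terminal value function: the expected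
`H`-step discounted costs of a fixed policy `π` on an MDP `M` and an
`α`-approximate MDP `M̂` differ by at most
`γ (1-γ^{H-1})/(1-γ) α H (c_max-c_min)/2 + γ^H α H (V_max-V_min)/2 + (1-γ^H)/(1-γ) α`. -/
theorem h_step_simulation_lemma
    {S A : Type*} [Fintype S] [Nonempty S] [Fintype A] [Nonempty A]
    (γ α cmin cmax Vmin Vmax : ℝ) (H : ℕ)
    (P Phat : S → A → S → ℝ) (c chat : S → A → ℝ) (V : S → ℝ) (π : S → A)
    (hH : 1 ≤ H) (hγ0 : 0 ≤ γ) (hγ1 : γ < 1) (hα : 0 ≤ α)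
    (hP0 : ∀ s a s', 0 ≤ P s a s') (hP1 : ∀ s a, ∑ s', P s a s' = 1)
    (hPhat0 : ∀ s a s', 0 ≤ Phat s a s') (hPhat1 : ∀ s a, ∑ s', Phat s a s' = 1)
    (hPα : ∀ s a, ∑ s', |Phat s a s' - P s a s'| ≤ α)
    (hcα : ∀ s a, |chat s a - c s a| ≤ α)
    (hcbound : ∀ s a, cmin ≤ c s a ∧ c s a ≤ cmax)
    (hVbound : ∀ s, Vmin ≤ V s ∧ V s ≤ Vmax) :
    ∀ s, |hStepCost P c γ π V H s - hStepCost Phat chat γ π V H s| ≤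
      γ * ((1 - γ ^ (H - 1)) / (1 - γ)) * α * H * ((cmax - cmin) / 2) +
      γ ^ H * α * H * ((Vmax - Vmin) / 2) +
      ((1 - γ ^ H) / (1 - γ)) * α := by
  have hd : (0:ℝ) < 1 - γ := by linarith
  have hdne : (1:ℝ) - γ ≠ 0 := ne_of_gt hd
  have hγne : γ ≠ 1 := ne_of_lt hγ1
  obtain ⟨s0⟩ := (inferInstance : Nonempty S)
  have hSc : cmin ≤ cmax := le_trans (hcbound s0 (π s0)).1 (hcbound s0 (π s0)).2
  have hSv : Vmin ≤ Vmax := le_trans (hVbound s0).1 (hVbound s0).2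
  -- bounds on the true value function
  have hJbd : ∀ H : ℕ, ∀ s,
      (∑ i ∈ range H, γ^i) * cmin + γ^H * Vmin ≤ hStepCost P c γ π V H s ∧
      hStepCost P c γ π V H s ≤ (∑ i ∈ range H, γ^i) * cmax + γ^H * Vmax := by
    intro H
    induction H with
    | zero => intro s; simpa [hStepCost] using hVbound s
    | succ n ih =>
      intro s
      have hlow : (∑ i ∈ range n, γ^i) * cmin + γ^n * Vmin
          ≤ ∑ s', P s (π s) s' * hStepCost P c γ π V n s' := by
        calc (∑ i ∈ range n, γ^i) * cmin + γ^n * Vmin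
            = ∑ s', P s (π s) s' * ((∑ i ∈ range n, γ^i) * cmin + γ^n * Vmin) := by
              rw [← Finset.sum_mul, hP1]; ring
          _ ≤ _ := Finset.sum_le_sum fun s' _ =>
              mul_le_mul_of_nonneg_left (ih s').1 (hP0 s (π s) s')
      have hhigh : ∑ s', P s (π s) s' * hStepCost P c γ π V n s'
          ≤ (∑ i ∈ range n, γ^i) * cmax + γ^n * Vmax := by
        calc ∑ s', P s (π s) s' * hStepCost P c γ π V n s'
            ≤ ∑ s', P s (π s) s' * ((∑ i ∈ range n, γ^i) * cmax + γ^n * Vmax) :=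
              Finset.sum_le_sum fun s' _ =>
                mul_le_mul_of_nonneg_left (ih s').2 (hP0 s (π s) s')
          _ = (∑ i ∈ range n, γ^i) * cmax + γ^n * Vmax := by
              rw [← Finset.sum_mul, hP1]; ring
      have hg : ∑ i ∈ range (n+1), γ^i = γ * ∑ i ∈ range n, γ^i + 1 := geom_sum_succ
      have hc1 := (hcbound s (π s)).1
      have hc2 := (hcbound s (π s)).2
      have hml := mul_le_mul_of_nonneg_left hlow hγ0
      have hmh := mul_le_mul_of_nonneg_left hhigh hγ0
      constructor
      · show _ ≤ c s (π s) + γ * ∑ s', P s (π s) s' * hStepCost P c γ π V n s'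
        calc (∑ i ∈ range (n+1), γ^i) * cmin + γ^(n+1) * Vmin
            = cmin + γ * ((∑ i ∈ range n, γ^i) * cmin + γ^n * Vmin) := by rw [hg]; ring
          _ ≤ _ := add_le_add hc1 hml
      · show c s (π s) + γ * ∑ s', P s (π s) s' * hStepCost P c γ π V n s' ≤ _
        calc c s (π s) + γ * ∑ s', P s (π s) s' * hStepCost P c γ π V n s'
            ≤ cmax + γ * ((∑ i ∈ range n, γ^i) * cmax + γ^n * Vmax) := add_le_add hc2 hmh
          _ = (∑ i ∈ range (n+1), γ^i) * cmax + γ^(n+1) * Vmax := by rw [hg]; ring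
  -- total-variation style lemma
  have tv : ∀ (p q f : S → ℝ) (lo hi : ℝ), (∀ x, 0 ≤ p x) → (∀ x, 0 ≤ q x) →
      (∑ x, p x = 1) → (∑ x, q x = 1) → (∑ x, |p x - q x|) ≤ α →
      (∀ x, lo ≤ f x) → (∀ x, f x ≤ hi) →
      |∑ x, (p x - q x) * f x| ≤ α * (hi - lo) / 2 := by
    intro p q f lo hi hp hq hp1 hq1 hpq hlo hhi
    have hhl : (0:ℝ) ≤ (hi - lo) / 2 := by
      have := le_trans (hlo s0) (hhi s0); linarith
    have hmid : ∑ x, (p x - q x) * f x = ∑ x, (p x - q x) * (f x - (hi + lo)/2) := by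
      rw [← sub_eq_zero, ← Finset.sum_sub_distrib]
      have : ∀ x ∈ Finset.univ (α := S),
          (p x - q x) * f x - (p x - q x) * (f x - (hi + lo)/2)
          = (p x - q x) * ((hi + lo)/2) := fun x _ => by ring
      rw [Finset.sum_congr rfl this, ← Finset.sum_mul, Finset.sum_sub_distrib, hp1, hq1]
      ring
    rw [hmid]
    calc |∑ x, (p x - q x) * (f x - (hi+lo)/2)|
        ≤ ∑ x, |(p x - q x) * (f x - (hi+lo)/2)| := Finset.abs_sum_le_sum_abs _ _
      _ = ∑ x, |p x - q x| * |f x - (hi+lo)/2| := by simp [abs_mul]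
      _ ≤ ∑ x, |p x - q x| * ((hi - lo)/2) := Finset.sum_le_sum fun x _ =>
          mul_le_mul_of_nonneg_left
            (abs_le.mpr ⟨by linarith [hlo x, hhi x], by linarith [hlo x, hhi x]⟩)
            (abs_nonneg _)
      _ = (∑ x, |p x - q x|) * ((hi - lo)/2) := (Finset.sum_mul _ _ _).symm
      _ ≤ α * ((hi - lo)/2) := mul_le_mul_of_nonneg_right hpq hhl
      _ = α * (hi - lo) / 2 := by ring
  -- the bound as a function of the horizon
  set B : ℕ → ℝ := fun H => γ * ((1 - γ ^ (H - 1)) / (1 - γ)) * α * H * ((cmax - cmin) / 2) +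
      γ ^ H * α * H * ((Vmax - Vmin) / 2) + ((1 - γ ^ H) / (1 - γ)) * α with hBdef
  -- algebraic recursion for B
  have alg : ∀ n : ℕ,
      α + γ * (α * (((∑ i ∈ range n, γ^i) * cmax + γ^n * Vmax)
        - ((∑ i ∈ range n, γ^i) * cmin + γ^n * Vmin)) / 2) + γ * B n ≤ B (n+1) := by
    intro n
    have hgs : ∑ i ∈ range n, γ^i = (1 - γ^n) / (1 - γ) := by
      rw [geom_sum_eq hγne, div_eq_div_iff (by intro h; apply hγne; linarith [sub_eq_zero.mp h]) hdne]
      ring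
    rw [hgs]
    match n with
    | 0 =>
      simp only [hBdef]
      push_cast
      field_simp
      ring_nf
      nlinarith [hα, hSv, mul_nonneg hγ0 hα]
    | Nat.succ m =>
      have h1 : m + 1 + 1 - 1 = m + 1 := rfl
      have h2 : m + 1 - 1 = m := rfl
      have key : B (m+1+1) = α + γ * (α * (((1 - γ^(m+1)) / (1 - γ)) * cmax + γ^(m+1) * Vmax
            - (((1 - γ^(m+1)) / (1 - γ)) * cmin + γ^(m+1) * Vmin)) / 2) + γ * B (m+1)
            + γ * α * (cmax - cmin) * (m+1) / 2 := by
        simp only [hBdef, h1, h2]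
        push_cast
        field_simp
        ring
      rw [key]
      have hnn : (0:ℝ) ≤ γ * α * (cmax - cmin) * (↑m + 1) / 2 :=
        div_nonneg (mul_nonneg (mul_nonneg (mul_nonneg hγ0 hα) (by linarith))
          (by positivity)) (by norm_num)
      simp only [Nat.succ_eq_add_one]
      linarith
  -- main induction
  have main : ∀ H : ℕ, ∀ s,
      |hStepCost P c γ π V H s - hStepCost Phat chat γ π V H s| ≤ B H := by
    intro H
    induction H with
    | zero => intro s; simp [hStepCost, hBdef]
    | succ n ih =>
      intro s
      have expand : hStepCost P c γ π V (n+1) s - hStepCost Phat chat γ π V (n+1) s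
          = (c s (π s) - chat s (π s))
            + γ * (∑ s', (P s (π s) s' - Phat s (π s) s') * hStepCost P c γ π V n s')
            + γ * (∑ s', Phat s (π s) s' *
                (hStepCost P c γ π V n s' - hStepCost Phat chat γ π V n s')) := by
        have h1 : ∑ s', (P s (π s) s' - Phat s (π s) s') * hStepCost P c γ π V n s'
            = ∑ s', P s (π s) s' * hStepCost P c γ π V n s'
              - ∑ s', Phat s (π s) s' * hStepCost P c γ π V n s' := by
          rw [← Finset.sum_sub_distrib]
          exact Finset.sum_congr rfl fun _ _ => by ring
        have h2 : ∑ s', Phat s (π s) s' *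
              (hStepCost P c γ π V n s' - hStepCost Phat chat γ π V n s')
            = ∑ s', Phat s (π s) s' * hStepCost P c γ π V n s'
              - ∑ s', Phat s (π s) s' * hStepCost Phat chat γ π V n s' := by
          rw [← Finset.sum_sub_distrib]
          exact Finset.sum_congr rfl fun _ _ => by ring
        show c s (π s) + γ * ∑ s', P s (π s) s' * hStepCost P c γ π V n s'
            - (chat s (π s) + γ * ∑ s', Phat s (π s) s' * hStepCost Phat chat γ π V n s') = _
        rw [h1, h2]; ring
      have t1 : |c s (π s) - chat s (π s)| ≤ α := by
        rw [abs_sub_comm]; exact hcα s (π s)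
      have t2 : |∑ s', (P s (π s) s' - Phat s (π s) s') * hStepCost P c γ π V n s'|
          ≤ α * (((∑ i ∈ range n, γ^i) * cmax + γ^n * Vmax)
              - ((∑ i ∈ range n, γ^i) * cmin + γ^n * Vmin)) / 2 := by
        refine tv _ _ _ _ _ (hP0 s (π s)) (hPhat0 s (π s)) (hP1 s (π s)) (hPhat1 s (π s))
          ?_ (fun s' => (hJbd n s').1) (fun s' => (hJbd n s').2)
        simpa [abs_sub_comm] using hPα s (π s)
      have t3 : |∑ s', Phat s (π s) s' *
            (hStepCost P c γ π V n s' - hStepCost Phat chat γ π V n s')| ≤ B n := by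
        calc |∑ s', Phat s (π s) s' *
              (hStepCost P c γ π V n s' - hStepCost Phat chat γ π V n s')|
            ≤ ∑ s', |Phat s (π s) s' *
              (hStepCost P c γ π V n s' - hStepCost Phat chat γ π V n s')| :=
              Finset.abs_sum_le_sum_abs _ _
          _ = ∑ s', Phat s (π s) s' *
              |hStepCost P c γ π V n s' - hStepCost Phat chat γ π V n s'| := by
              simp only [abs_mul]
              exact Finset.sum_congr rfl fun s' _ => by
                rw [abs_of_nonneg (hPhat0 s (π s) s')]
          _ ≤ ∑ s', Phat s (π s) s' * B n := Finset.sum_le_sum fun s' _ =>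
              mul_le_mul_of_nonneg_left (ih s') (hPhat0 s (π s) s')
          _ = B n := by rw [← Finset.sum_mul, hPhat1, one_mul]
      rw [expand]
      have habs : |(c s (π s) - chat s (π s))
            + γ * (∑ s', (P s (π s) s' - Phat s (π s) s') * hStepCost P c γ π V n s')
            + γ * (∑ s', Phat s (π s) s' *
                (hStepCost P c γ π V n s' - hStepCost Phat chat γ π V n s'))|
          ≤ |c s (π s) - chat s (π s)|
            + γ * |∑ s', (P s (π s) s' - Phat s (π s) s') * hStepCost P c γ π V n s'|
            + γ * |∑ s', Phat s (π s) s' *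
                (hStepCost P c γ π V n s' - hStepCost Phat chat γ π V n s')| := by
        calc _ ≤ |(c s (π s) - chat s (π s))
              + γ * (∑ s', (P s (π s) s' - Phat s (π s) s') * hStepCost P c γ π V n s')|
              + |γ * (∑ s', Phat s (π s) s' *
                (hStepCost P c γ π V n s' - hStepCost Phat chat γ π V n s'))| := abs_add_le _ _
          _ ≤ _ := by
            have h2 := abs_add_le (c s (π s) - chat s (π s))
              (γ * (∑ s', (P s (π s) s' - Phat s (π s) s') * hStepCost P c γ π V n s'))
            rw [abs_mul, abs_of_nonneg hγ0] at h2
            rw [abs_mul, abs_of_nonneg hγ0]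
            linarith
      refine le_trans habs (le_trans ?_ (alg n))
      have m2 := mul_le_mul_of_nonneg_left t2 hγ0
      have m3 := mul_le_mul_of_nonneg_left t3 hγ0
      exact add_le_add (add_le_add t1 m2) m3
  exact main H
end

section
/- Let M be a finite MDP with optimal policy π* and optimal value V* bounded in [V_min, V_max], costs bounded in [c_min, c_max], discount γ ∈ [0,1). Let M̂ be an α-approximation of M (transition kernels within α in L1, costs within α), and V̂ an ε-approximation of V* in sup norm. Let π̂ be the H-step greedy policy: from each state s, π̂ executes the first action of the sequence minimizing the expected H-step discounted cost in M̂ with terminal cost γ^H V̂. Then ‖V^{π̂}_M − V*‖_∞ ≤ (2/(1 − γ^H)) [ γ ((1 − γ^{H−1})/(1 − γ)) α H (c_max − c_min)/2 + γ^H α H (V_max − V_min)/2 + ((1 − γ^H)/(1 − γ)) α + γ^H ε ]. -/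
open Finset

section WeightedSum

variable {ι : Type*} [Fintype ι] {p q f : ι → ℝ}

theorem sum_mul_mem_of_convex {s : Set ℝ} (hs : Convex ℝ s) (hp0 : ∀ i, 0 ≤ p i)
    (hp1 : ∑ i, p i = 1) (hf : ∀ i, f i ∈ s) : ∑ i, p i * f i ∈ s := by
  simpa only [smul_eq_mul] using hs.sum_mem (fun i _ => hp0 i) hp1 (fun i _ => hf i)

theorem abs_sum_mul_le {e : ℝ} (hp0 : ∀ i, 0 ≤ p i) (hp1 : ∑ i, p i = 1)
    (hf : ∀ i, |f i| ≤ e) : |∑ i, p i * f i| ≤ e :=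
  abs_le.2 <| sum_mul_mem_of_convex (convex_Icc (-e) e) hp0 hp1 fun i => abs_le.1 (hf i)

theorem abs_sum_sub_mul_le {L U : ℝ} (hpq : ∑ i, q i = ∑ i, p i)
    (hf : ∀ i, f i ∈ Set.Icc L U) :
    |∑ i, (q i - p i) * f i| ≤ (∑ i, |q i - p i|) * ((U - L) / 2) := by
  -- `q - p` has total mass zero, so `f` may be centred at the midpoint of `[L, U]`.
  have hcentre : ∑ i, (q i - p i) * f i = ∑ i, (q i - p i) * (f i - (L + U) / 2) := by
    simp only [mul_sub, sum_sub_distrib, ← sum_mul, hpq, sub_self, zero_mul, sub_zero]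
  rw [hcentre, sum_mul]
  refine (abs_sum_le_sum_abs _ _).trans (sum_le_sum fun i _ => ?_)
  rw [abs_mul]
  refine mul_le_mul_of_nonneg_left (abs_le.2 ⟨?_, ?_⟩) (abs_nonneg _) <;>
    linarith [(hf i).1, (hf i).2]

end WeightedSum

theorem Finite.le_div_one_sub_of_le_add_mul {S : Type*} [Finite S] [Nonempty S] {u : S → ℝ}
    {K κ : ℝ} (hκ : κ < 1) (h : ∀ δ, (∀ s, u s ≤ δ) → ∀ s, u s ≤ K + κ * δ) (s : S) :
    u s ≤ K / (1 - κ) := by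
  obtain ⟨s₀, hs₀⟩ := Finite.exists_max u
  have hfix : u s₀ ≤ K + κ * u s₀ := h (u s₀) hs₀ s₀
  refine (hs₀ s).trans ?_
  rw [le_div_iff₀ (sub_pos.2 hκ)]
  linarith

section HStepCost

variable {S A : Type*} [Fintype S] (P : S → A → S → ℝ) (c : S → A → ℝ) (γ : ℝ) (π : S → A)

@[simp]
theorem hStepCost_zero (V : S → ℝ) (s : S) : hStepCost P c γ π V 0 s = V s := rfl

theorem hStepCost_succ (V : S → ℝ) (H : ℕ) (s : S) :
    hStepCost P c γ π V (H + 1) s =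
      c s (π s) + γ * ∑ s', P s (π s) s' * hStepCost P c γ π V H s' := rfl

theorem hStepCost_eq_of_bellman {V : S → ℝ}
    (hV : ∀ s, V s = c s (π s) + γ * ∑ s', P s (π s) s' * V s') (H : ℕ) (s : S) :
    hStepCost P c γ π V H s = V s := by
  induction H generalizing s with
  | zero => rfl
  | succ H ih => simp only [hStepCost_succ, ih, ← hV]

theorem abs_hStepCost_sub_le_of_terminal {V W : S → ℝ} {e : ℝ} (hγ : 0 ≤ γ)
    (hP0 : ∀ s a s', 0 ≤ P s a s') (hP1 : ∀ s a, ∑ s', P s a s' = 1)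
    (he : ∀ s, |V s - W s| ≤ e) (H : ℕ) (s : S) :
    |hStepCost P c γ π V H s - hStepCost P c γ π W H s| ≤ γ ^ H * e := by
  induction H generalizing s with
  | zero => simpa using he s
  | succ H ih =>
    have hdiff : hStepCost P c γ π V (H + 1) s - hStepCost P c γ π W (H + 1) s =
        γ * ∑ s', P s (π s) s' * (hStepCost P c γ π V H s' - hStepCost P c γ π W H s') := by
      simp only [hStepCost_succ, mul_sub, sum_sub_distrib]
      ring
    rw [hdiff, abs_mul, abs_of_nonneg hγ, pow_succ', mul_assoc]
    exact mul_le_mul_of_nonneg_left (abs_sum_mul_le (hP0 s _) (hP1 s _) ih) hγ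

theorem hStepCost_mem_Icc {V : S → ℝ} {cmin cmax Vmin Vmax : ℝ} (hγ : 0 ≤ γ)
    (hP0 : ∀ s a s', 0 ≤ P s a s') (hP1 : ∀ s a, ∑ s', P s a s' = 1)
    (hc : ∀ s a, c s a ∈ Set.Icc cmin cmax) (hV : ∀ s, V s ∈ Set.Icc Vmin Vmax)
    (H : ℕ) (s : S) :
    hStepCost P c γ π V H s ∈ Set.Icc (cmin * ∑ i ∈ range H, γ ^ i + γ ^ H * Vmin)
      (cmax * ∑ i ∈ range H, γ ^ i + γ ^ H * Vmax) := by
  induction H generalizing s with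
  | zero => simpa using hV s
  | succ H ih =>
    have hnext := sum_mul_mem_of_convex (convex_Icc _ _) (hP0 s (π s)) (hP1 s (π s)) ih
    rw [hStepCost_succ, geom_sum_succ, pow_succ']
    constructor <;> nlinarith [hnext.1, hnext.2, (hc s (π s)).1, (hc s (π s)).2]

end HStepCost

/-- The paper's `(1 - γ^k) / (1 - γ)` appears here as the geometric sum `∑ i < k, γ^i`. -/
noncomputable def simulationBound (γ α dc dV : ℝ) (k : ℕ) : ℝ :=
  γ * (∑ i ∈ range (k - 1), γ ^ i) * α * k * (dc / 2) + γ ^ k * α * k * (dV / 2) +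
    (∑ i ∈ range k, γ ^ i) * α

theorem simulationBound_step {γ α dc dV : ℝ} (hγ : 0 ≤ γ) (hα : 0 ≤ α) (hdc : 0 ≤ dc)
    (k : ℕ) :
    α + γ * (simulationBound γ α dc dV k +
        α * ((dc * ∑ i ∈ range k, γ ^ i + γ ^ k * dV) / 2)) ≤
      simulationBound γ α dc dV (k + 1) := by
  have hgeom : γ * ∑ i ∈ range (k - 1), γ ^ i ≤ ∑ i ∈ range k, γ ^ i := by
    rcases k with _ | k
    · simp
    · rw [geom_sum_succ, Nat.add_sub_cancel]
      linarith
  have hcoef : 0 ≤ γ * α * k * (dc / 2) := by positivity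
  have hcross := mul_le_mul_of_nonneg_left hgeom hcoef
  simp only [simulationBound, Nat.add_sub_cancel, geom_sum_succ, pow_succ, Nat.cast_succ]
  linarith

section Simulation

variable {S A : Type*} [Fintype S] (P Phat : S → A → S → ℝ) (c chat : S → A → ℝ) (γ : ℝ)
  (π : S → A)

theorem abs_hStepCost_sub_le_succ {V : S → ℝ} {α D : ℝ} (hγ : 0 ≤ γ)
    (hP1 : ∀ s a, ∑ s', P s a s' = 1)
    (hPhat0 : ∀ s a s', 0 ≤ Phat s a s') (hPhat1 : ∀ s a, ∑ s', Phat s a s' = 1)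
    (hPα : ∀ s a, ∑ s', |Phat s a s' - P s a s'| ≤ α)
    (hcα : ∀ s a, |chat s a - c s a| ≤ α) {L U : ℝ} (hLU : L ≤ U) (k : ℕ)
    (hJ : ∀ s, hStepCost P c γ π V k s ∈ Set.Icc L U)
    (hD : ∀ s, |hStepCost Phat chat γ π V k s - hStepCost P c γ π V k s| ≤ D) (s : S) :
    |hStepCost Phat chat γ π V (k + 1) s - hStepCost P c γ π V (k + 1) s| ≤
      α + γ * (D + α * ((U - L) / 2)) := by
  set a := π s
  have hsplit : hStepCost Phat chat γ π V (k + 1) s - hStepCost P c γ π V (k + 1) s =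
      (chat s a - c s a) + γ * (∑ s', Phat s a s' *
          (hStepCost Phat chat γ π V k s' - hStepCost P c γ π V k s') +
        ∑ s', (Phat s a s' - P s a s') * hStepCost P c γ π V k s') := by
    simp only [hStepCost_succ, mul_sub, sub_mul, sum_sub_distrib]
    ring
  have hmodel := abs_sum_mul_le (hPhat0 s a) (hPhat1 s a) hD
  have htransition : |∑ s', (Phat s a s' - P s a s') * hStepCost P c γ π V k s'| ≤
      α * ((U - L) / 2) :=
    (abs_sum_sub_mul_le ((hPhat1 s a).trans (hP1 s a).symm) hJ).trans
      (mul_le_mul_of_nonneg_right (hPα s a) (by linarith))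
  rw [hsplit]
  refine (abs_add_le _ _).trans (add_le_add (hcα s a) ?_)
  rw [abs_mul, abs_of_nonneg hγ]
  exact mul_le_mul_of_nonneg_left ((abs_add_le _ _).trans (add_le_add hmodel htransition)) hγ

theorem abs_hStepCost_sub_le_simulationBound {V : S → ℝ} {α cmin cmax Vmin Vmax : ℝ}
    (hγ : 0 ≤ γ) (hα : 0 ≤ α)
    (hP0 : ∀ s a s', 0 ≤ P s a s') (hP1 : ∀ s a, ∑ s', P s a s' = 1)
    (hPhat0 : ∀ s a s', 0 ≤ Phat s a s') (hPhat1 : ∀ s a, ∑ s', Phat s a s' = 1)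
    (hPα : ∀ s a, ∑ s', |Phat s a s' - P s a s'| ≤ α)
    (hcα : ∀ s a, |chat s a - c s a| ≤ α)
    (hc : ∀ s a, c s a ∈ Set.Icc cmin cmax) (hV : ∀ s, V s ∈ Set.Icc Vmin Vmax)
    (hcc : cmin ≤ cmax) (hVV : Vmin ≤ Vmax) (k : ℕ) (s : S) :
    |hStepCost Phat chat γ π V k s - hStepCost P c γ π V k s| ≤
      simulationBound γ α (cmax - cmin) (Vmax - Vmin) k := by
  induction k generalizing s with
  | zero => simp [simulationBound]
  | succ k ih =>
    have hLU : cmin * ∑ i ∈ range k, γ ^ i + γ ^ k * Vmin ≤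
        cmax * ∑ i ∈ range k, γ ^ i + γ ^ k * Vmax := by
      have : 0 ≤ ∑ i ∈ range k, γ ^ i := sum_nonneg fun i _ => pow_nonneg hγ i
      gcongr
    refine (abs_hStepCost_sub_le_succ P Phat c chat γ π hγ hP1 hPhat0 hPhat1 hPα hcα hLU k
      (hStepCost_mem_Icc P c γ π hγ hP0 hP1 hc hV k) ih s).trans ?_
    exact (le_of_eq (by ring)).trans (simulationBound_step hγ hα (sub_nonneg.2 hcc) k)

end Simulation

section Approximation

variable {S A : Type*} [Fintype S] (P Phat : S → A → S → ℝ) (c chat : S → A → ℝ) (γ : ℝ)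

theorem abs_hStepCost_approx_sub_le (π : S → A) {V Vhat : S → ℝ}
    {α ε cmin cmax Vmin Vmax : ℝ} (hγ : 0 ≤ γ) (hα : 0 ≤ α)
    (hP0 : ∀ s a s', 0 ≤ P s a s') (hP1 : ∀ s a, ∑ s', P s a s' = 1)
    (hPhat0 : ∀ s a s', 0 ≤ Phat s a s') (hPhat1 : ∀ s a, ∑ s', Phat s a s' = 1)
    (hPα : ∀ s a, ∑ s', |Phat s a s' - P s a s'| ≤ α)
    (hcα : ∀ s a, |chat s a - c s a| ≤ α)
    (hc : ∀ s a, c s a ∈ Set.Icc cmin cmax) (hV : ∀ s, V s ∈ Set.Icc Vmin Vmax)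
    (hcc : cmin ≤ cmax) (hVV : Vmin ≤ Vmax) (hVε : ∀ s, |Vhat s - V s| ≤ ε) (H : ℕ) (s : S) :
    |hStepCost Phat chat γ π Vhat H s - hStepCost P c γ π V H s| ≤
      γ ^ H * ε + simulationBound γ α (cmax - cmin) (Vmax - Vmin) H :=
  (abs_sub_le _ (hStepCost Phat chat γ π V H s) _).trans <|
    add_le_add (abs_hStepCost_sub_le_of_terminal Phat chat γ π hγ hPhat0 hPhat1 hVε H s)
      (abs_hStepCost_sub_le_simulationBound P Phat c chat γ π hγ hα hP0 hP1 hPhat0 hPhat1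
        hPα hcα hc hV hcc hVV H s)

theorem optimalValue_le_policyValue [Nonempty S] {Vstar Vπ : S → ℝ} {π : S → A}
    (hγ0 : 0 ≤ γ) (hγ1 : γ < 1)
    (hP0 : ∀ s a s', 0 ≤ P s a s') (hP1 : ∀ s a, ∑ s', P s a s' = 1)
    (hVstar : ∀ s a, Vstar s ≤ c s a + γ * ∑ s', P s a s' * Vstar s')
    (hVπ : ∀ s, Vπ s = c s (π s) + γ * ∑ s', P s (π s) s' * Vπ s') (s : S) :
    Vstar s ≤ Vπ s := by
  have hloss : Vstar s - Vπ s ≤ 0 / (1 - γ) := by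
    refine Finite.le_div_one_sub_of_le_add_mul (u := fun s => Vstar s - Vπ s) hγ1
      (fun δ hδ s => ?_) s
    calc Vstar s - Vπ s
        ≤ (c s (π s) + γ * ∑ s', P s (π s) s' * Vstar s') -
            (c s (π s) + γ * ∑ s', P s (π s) s' * Vπ s') :=
          sub_le_sub (hVstar s (π s)) (hVπ s).ge
      _ = 0 + γ * ∑ s', P s (π s) s' * (Vstar s' - Vπ s') := by
          simp only [mul_sub, sum_sub_distrib]
          ring
      _ ≤ 0 + γ * δ := by
          gcongr
          exact sum_mul_mem_of_convex (convex_Iic δ) (hP0 s _) (hP1 s _) hδ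
  rw [zero_div] at hloss
  linarith

end Approximation

theorem h_step_greedy_performance_bound_general
    {S A : Type*} [Fintype S] [Nonempty S] [Nonempty A]
    (γ α ε cmin cmax Vmin Vmax : ℝ) (H : ℕ)
    (P Phat : S → A → S → ℝ) (c chat : S → A → ℝ)
    (Vstar Vhat Vpihat : S → ℝ) (pistar pihat : S → A)
    (hH : 1 ≤ H) (hγ0 : 0 ≤ γ) (hγ1 : γ < 1) (hα : 0 ≤ α)
    (hP0 : ∀ s a s', 0 ≤ P s a s') (hP1 : ∀ s a, ∑ s', P s a s' = 1)
    (hPhat0 : ∀ s a s', 0 ≤ Phat s a s') (hPhat1 : ∀ s a, ∑ s', Phat s a s' = 1)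
    (hPα : ∀ s a, ∑ s', |Phat s a s' - P s a s'| ≤ α)
    (hcα : ∀ s a, |chat s a - c s a| ≤ α)
    (hcbound : ∀ s a, cmin ≤ c s a ∧ c s a ≤ cmax)
    (hVbound : ∀ s, Vmin ≤ Vstar s ∧ Vstar s ≤ Vmax)
    (hVε : ∀ s, |Vhat s - Vstar s| ≤ ε)
    -- `V*` is the value of the optimal policy `π*` on `M` (Bellman equation) …
    (hVstarBellman : ∀ s,
      Vstar s = c s (pistar s) + γ * ∑ s', P s (pistar s) s' * Vstar s')
    -- … and `V*` is optimal (Bellman optimality inequality)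
    (hVstarOpt : ∀ s a, Vstar s ≤ c s a + γ * ∑ s', P s a s' * Vstar s')
    -- `V^π̂_M` is the infinite-horizon value of `π̂` on the true MDP `M`
    (hVpihatBellman : ∀ s,
      Vpihat s = c s (pihat s) + γ * ∑ s', P s (pihat s) s' * Vpihat s')
    -- `π̂` is the `H`-step greedy policy w.r.t. the approximate model/value
    (hgreedy : ∀ (π : S → A) (s : S),
      hStepCost Phat chat γ pihat Vhat H s ≤ hStepCost Phat chat γ π Vhat H s) :
    ∀ s, |Vpihat s - Vstar s| ≤
      (2 / (1 - γ ^ H)) *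
        (γ * ((1 - γ ^ (H - 1)) / (1 - γ)) * α * H * ((cmax - cmin) / 2) +
         γ ^ H * α * H * ((Vmax - Vmin) / 2) +
         ((1 - γ ^ H) / (1 - γ)) * α + γ ^ H * ε) := by
  obtain ⟨s₁⟩ := ‹Nonempty S›
  obtain ⟨a₁⟩ := ‹Nonempty A›
  set B := γ ^ H * ε + simulationBound γ α (cmax - cmin) (Vmax - Vmin) H with hB
  have happrox (π : S → A) (s : S) :
      |hStepCost Phat chat γ π Vhat H s - hStepCost P c γ π Vstar H s| ≤ B :=
    abs_hStepCost_approx_sub_le P Phat c chat γ π hγ0 hα hP0 hP1 hPhat0 hPhat1 hPα hcα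
      hcbound hVbound ((hcbound s₁ a₁).1.trans (hcbound s₁ a₁).2)
      ((hVbound s₁).1.trans (hVbound s₁).2) hVε H s
  have hdom := optimalValue_le_policyValue P c γ hγ0 hγ1 hP0 hP1 hVstarOpt hVpihatBellman
  have hloss : ∀ s, Vpihat s - Vstar s ≤ 2 * B / (1 - γ ^ H) := by
    refine Finite.le_div_one_sub_of_le_add_mul (pow_lt_one₀ hγ0 hγ1 (by omega))
      fun δ hδ s => ?_
    have hterminal := abs_hStepCost_sub_le_of_terminal P c γ pihat hγ0 hP0 hP1
      (fun s => abs_le.2 ⟨by linarith [hdom s, hδ s], hδ s⟩) H s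
    have hVpihat := hStepCost_eq_of_bellman P c γ pihat hVpihatBellman H s
    have hVstar := hStepCost_eq_of_bellman P c γ pistar hVstarBellman H s
    have happrox_pihat := abs_le.1 (happrox pihat s)
    have happrox_pistar := abs_le.1 (happrox pistar s)
    -- `V^π̂ ≈ J_M(V*, π̂) ≈ J_M̂(V̂, π̂) ≤ J_M̂(V̂, π*) ≈ J_M(V*, π*) = V*`
    linarith [(abs_le.1 hterminal).2, hgreedy pistar s]
  have hgeom (n : ℕ) : ∑ i ∈ range n, γ ^ i = (1 - γ ^ n) / (1 - γ) := by
    rw [geom_sum_eq hγ1.ne, ← neg_div_neg_eq, neg_sub, neg_sub]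
  intro s
  rw [abs_of_nonneg (sub_nonneg.2 (hdom s))]
  refine (hloss s).trans (le_of_eq ?_)
  simp only [hB, simulationBound, hgeom]
  ring

/-- Performance bound of the `H`-step greedy policy `π̂` computed with an
`α`-approximate model `M̂` and `ε`-approximate terminal value `V̂`. -/
theorem h_step_greedy_performance_bound
    {S A : Type*} [Fintype S] [Nonempty S] [Fintype A] [Nonempty A]
    (γ α ε cmin cmax Vmin Vmax : ℝ) (H : ℕ)
    (P Phat : S → A → S → ℝ) (c chat : S → A → ℝ)
    (Vstar Vhat Vpihat : S → ℝ) (pistar pihat : S → A)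
    (hH : 1 ≤ H) (hγ0 : 0 ≤ γ) (hγ1 : γ < 1) (hα : 0 ≤ α) (hε : 0 ≤ ε)
    (hP0 : ∀ s a s', 0 ≤ P s a s') (hP1 : ∀ s a, ∑ s', P s a s' = 1)
    (hPhat0 : ∀ s a s', 0 ≤ Phat s a s') (hPhat1 : ∀ s a, ∑ s', Phat s a s' = 1)
    (hPα : ∀ s a, ∑ s', |Phat s a s' - P s a s'| ≤ α)
    (hcα : ∀ s a, |chat s a - c s a| ≤ α)
    (hcbound : ∀ s a, cmin ≤ c s a ∧ c s a ≤ cmax)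
    (hVbound : ∀ s, Vmin ≤ Vstar s ∧ Vstar s ≤ Vmax)
    (hVε : ∀ s, |Vhat s - Vstar s| ≤ ε)
    -- `V*` is the value of the optimal policy `π*` on `M` (Bellman equation) …
    (hVstarBellman : ∀ s,
      Vstar s = c s (pistar s) + γ * ∑ s', P s (pistar s) s' * Vstar s')
    -- … and `V*` is optimal (Bellman optimality inequality)
    (hVstarOpt : ∀ s a, Vstar s ≤ c s a + γ * ∑ s', P s a s' * Vstar s')
    -- `V^π̂_M` is the infinite-horizon value of `π̂` on the true MDP `M`
    (hVpihatBellman : ∀ s,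
      Vpihat s = c s (pihat s) + γ * ∑ s', P s (pihat s) s' * Vpihat s')
    -- `π̂` is the `H`-step greedy policy w.r.t. the approximate model/value
    (hgreedy : ∀ (π : S → A) (s : S),
      hStepCost Phat chat γ pihat Vhat H s ≤ hStepCost Phat chat γ π Vhat H s) :
    ∀ s, |Vpihat s - Vstar s| ≤
      (2 / (1 - γ ^ H)) *
        (γ * ((1 - γ ^ (H - 1)) / (1 - γ)) * α * H * ((cmax - cmin) / 2) +
         γ ^ H * α * H * ((Vmax - Vmin) / 2) +
         ((1 - γ ^ H) / (1 - γ)) * α + γ ^ H * ε) :=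
  h_step_greedy_performance_bound_general γ α ε cmin cmax Vmin Vmax H P Phat c chat Vstar Vhat
    Vpihat pistar pihat hH hγ0 hγ1 hα hP0 hP1 hPhat0 hPhat1 hPα hcα hcbound hVbound hVε
    hVstarBellman hVstarOpt hVpihatBellman hgreedy
end
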